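/- arXiv:2105.04176 — 2 statements merged into one kernel-verified Lean document; each statement's English description precedes it below -/
import Mathlib

section
/- Let Σ₁ and Σ₂ be disjoint finite alphabets and let A be a finite automaton (NFA) over Σ₁ ∪ Σ₂ with a Büchi acceptance condition recognizing an ω-language L ⊆ Σ₁* · Σ₂^ω. For each state q, let L₁^q = { w ∈ Σ₁* | some initial state reaches q on w } and L₂^q = { w ∈ Σ₂^ω | there is an accepting run on w starting from q }. Then L = ⋃_q L₁^q · L₂^q. -/
/-- A nondeterministic automaton with a Büchi acceptance condition. -/
structure BuchiNFA (α : Type) where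
  State : Type
  init : Set State
  accept : Set State
  step : State → α → Set State

namespace BuchiNFA

variable {α : Type} (A : BuchiNFA α)

/-- `r` is a run of `A` on the ω-word `w` starting in state `q`. -/
def IsRun (q : A.State) (w : ℕ → α) (r : ℕ → A.State) : Prop :=
  r 0 = q ∧ ∀ n, r (n + 1) ∈ A.step (r n) (w n)

/-- A run is (Büchi-)accepting if it visits an accepting state infinitely often. -/
def IsAccepting (r : ℕ → A.State) : Prop :=
  ∀ n, ∃ m ≥ n, r m ∈ A.accept

/-- The ω-language of `A`. -/
def Lang : Set (ℕ → α) :=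
  {w | ∃ q ∈ A.init, ∃ r, A.IsRun q w r ∧ A.IsAccepting r}

/-- `Reaches A q u q'`: state `q` reaches state `q'` by reading the finite word `u`. -/
inductive Reaches : A.State → List α → A.State → Prop
  | nil (q : A.State) : Reaches q [] q
  | cons {q q' q'' : A.State} {a : α} {u : List α} :
      q' ∈ A.step q a → Reaches q' u q'' → Reaches q (a :: u) q''

end BuchiNFA

/-- The ω-word `u · w`. -/
def listAppendOmega {α : Type} (u : List α) (w : ℕ → α) : ℕ → α :=
  fun n => if h : n < u.length then u.get ⟨n, h⟩ else w (n - u.length)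

namespace BuchiNFA

variable {α : Type} {A : BuchiNFA α}

lemma reaches_of_run : ∀ (k : ℕ) (w : ℕ → α) (r : ℕ → A.State),
    (∀ n, r (n + 1) ∈ A.step (r n) (w n)) →
    A.Reaches (r 0) (List.ofFn (fun i : Fin k => w i)) (r k) := by
  intro k
  induction k with
  | zero => intro w r _; simpa using Reaches.nil (r 0)
  | succ k ih =>
    intro w r h
    rw [List.ofFn_succ]
    refine Reaches.cons (h 0) ?_
    have := ih (fun n => w (n + 1)) (fun n => r (n + 1)) (fun n => h (n + 1))
    simpa [Fin.val_succ, Nat.add_comm] using this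

lemma listAppendOmega_cons_succ (a : α) (u : List α) (v : ℕ → α) (n : ℕ) :
    listAppendOmega (a :: u) v (n + 1) = listAppendOmega u v n := by
  simp only [listAppendOmega, List.length_cons]
  by_cases h : n < u.length
  · rw [dif_pos (by omega), dif_pos h]
    simp
  · rw [dif_neg (by omega), dif_neg h]
    congr 1
    omega

lemma run_append (u : List α) {q₀ q : A.State} (h : A.Reaches q₀ u q)
    (v : ℕ → α) (r : ℕ → A.State) (hr : A.IsRun q v r) (ha : A.IsAccepting r) :
    ∃ r', A.IsRun q₀ (listAppendOmega u v) r' ∧ A.IsAccepting r' := by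
  induction h with
  | nil q =>
    refine ⟨r, ?_, ha⟩
    have : listAppendOmega ([] : List α) v = v := by
      funext n; simp [listAppendOmega]
    rw [this]; exact hr
  | @cons p p' p'' a u hs _ ih =>
    obtain ⟨r', ⟨hr0, hrs⟩, ha'⟩ := ih hr
    refine ⟨fun n => Nat.rec p (fun n _ => r' n) n, ⟨rfl, ?_⟩, ?_⟩
    · intro n
      cases n with
      | zero =>
        show r' 0 ∈ A.step p (listAppendOmega (a :: u) v 0)
        have h0 : listAppendOmega (a :: u) v 0 = a := by
          simp [listAppendOmega]
        rw [h0, hr0]; exact hs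
      | succ n =>
        show r' (n + 1) ∈ A.step (r' n) (listAppendOmega (a :: u) v (n + 1))
        rw [listAppendOmega_cons_succ]
        exact hrs n
    · intro n
      obtain ⟨m, hm, hacc⟩ := ha' n
      exact ⟨m + 1, by omega, hacc⟩

end BuchiNFA

theorem stmt7 {α : Type} [Finite α] (A : BuchiNFA α) [Finite A.State]
    (S1 S2 : Set α) (hdisj : Disjoint S1 S2)
    (hL : A.Lang ⊆ {w | ∃ u : List α, (∀ a ∈ u, a ∈ S1) ∧
      ∃ v : ℕ → α, (∀ n, v n ∈ S2) ∧ w = listAppendOmega u v}) :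
    A.Lang = ⋃ q : A.State,
      {w | ∃ u : List α, (∀ a ∈ u, a ∈ S1) ∧ (∃ q₀ ∈ A.init, A.Reaches q₀ u q) ∧
        ∃ v : ℕ → α, (∀ n, v n ∈ S2) ∧
          (∃ r, A.IsRun q v r ∧ A.IsAccepting r) ∧
          w = listAppendOmega u v} := by
  ext w
  simp only [Set.mem_iUnion]
  constructor
  · intro hw
    obtain ⟨u, hu1, v, hv2, hwe⟩ := hL hw
    obtain ⟨q₀, hq₀, r, ⟨hr0, hrs⟩, hacc⟩ := hw
    refine ⟨r u.length, u, hu1, ⟨q₀, hq₀, ?_⟩, v, hv2,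
      ⟨fun n => r (n + u.length), ⟨by simp, ?_⟩, ?_⟩, hwe⟩
    · have hreach := BuchiNFA.reaches_of_run u.length w r hrs
      rw [hr0] at hreach
      have hofn : List.ofFn (fun i : Fin u.length => w i) = u := by
        have : (fun i : Fin u.length => w i) = u.get := by
          funext i
          rw [hwe]
          simp [listAppendOmega, i.isLt]
        rw [this, List.ofFn_get]
      rwa [hofn] at hreach
    · intro n
      have hw' : w (n + u.length) = v n := by
        rw [hwe]
        simp [listAppendOmega]
      have h2 := hrs (n + u.length)
      rw [hw'] at h2
      show r (n + 1 + u.length) ∈ A.step (r (n + u.length)) (v n)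
      rwa [Nat.add_right_comm]
    · intro n
      obtain ⟨m, hm, hacc'⟩ := hacc (n + u.length)
      refine ⟨m - u.length, by omega, ?_⟩
      show r (m - u.length + u.length) ∈ A.accept
      have h3 : m - u.length + u.length = m := by omega
      rw [h3]; exact hacc'
  · rintro ⟨q, u, _, ⟨q₀, hq₀, hreach⟩, v, _, ⟨r, hr, hacc⟩, hwe⟩
    obtain ⟨r', hr', hacc'⟩ := BuchiNFA.run_append u hreach v r hr hacc
    exact ⟨q₀, hq₀, r', by rw [hwe]; exact hr', hacc'⟩
end

section
/- Let M ⊆ ℕ³ be a relation satisfying: M(i,j,k) → (k = 0 ↔ i = 0 ∨ j = 0); M symmetric in its first two arguments; and whenever M(i,j,k) with j > 0, there exists k' with M(i, j-1, k') and i + k' = k. Then M(i,j,k) implies i · j = k. -/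
theorem stmt11 (M : ℕ → ℕ → ℕ → Prop)
    (h0 : ∀ i j k, M i j k → (k = 0 ↔ i = 0 ∨ j = 0))
    (hsym : ∀ i j k, M i j k → M j i k)
    (hdec : ∀ i j k, M i j k → 0 < j → ∃ k', M i (j - 1) k' ∧ i + k' = k) :
    ∀ i j k, M i j k → i * j = k := by
  intro i j
  induction j with
  | zero =>
    intro k hM
    have := (h0 i 0 k hM).mpr (Or.inr rfl)
    omega
  | succ n ih =>
    intro k hM
    obtain ⟨k', hM', hk⟩ := hdec i (n+1) k hM (Nat.succ_pos n)
    have := ih k' (by simpa using hM')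
    have : i * (n + 1) = i * n + i := by ring
    omega
end
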